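/- For a finite dataset of N points with group assignment g and cluster assignment c such that every cluster is nonempty, equality ∑_{k∈K} (|c̃_k|/N)·H_k = H holds if and only if the counting independence condition |g̃_t ∩ c̃_k|·N = |g̃_t|·|c̃_k| holds for all groups t and clusters k. -/

import Mathlib

/-!
The weighted cluster entropy is `∑ₜ ∑ₖ wₖ η(pₜₖ)` with `η = negMulLog`, cluster weights
`wₖ = |c̃ₖ|/N` and conditional frequencies `pₜₖ = |g̃ₜ ∩ c̃ₖ|/|c̃ₖ|`, while the global entropy is
`∑ₜ η(∑ₖ wₖ pₜₖ)` because `∑ₖ wₖ pₜₖ = |g̃ₜ|/N`. Jensen's inequality for the strictly concave `η`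
bounds each summand of the first by the corresponding summand of the second, so the totals agree
iff every Jensen inequality is an equality, i.e. iff `pₜₖ = |g̃ₜ|/N` for all `t` and `k`.
-/

/-- Number of points in group `t`: `|g̃_t|` where `g̃_t = {i | g i = t}`. -/
def gcnt {N : ℕ} {T : Type*} [DecidableEq T] (g : Fin N → T) (t : T) : ℕ :=
  (Finset.univ.filter fun i => g i = t).card

/-- Number of points in cluster `k`: `|c̃_k|` where `c̃_k = {i | c i = k}`. -/
def ccnt {N : ℕ} {K : Type*} [DecidableEq K] (c : Fin N → K) (k : K) : ℕ :=
  (Finset.univ.filter fun i => c i = k).card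

/-- Number of points in group `t` and cluster `k`: `|g̃_t ∩ c̃_k|`. -/
def gccnt {N : ℕ} {T K : Type*} [DecidableEq T] [DecidableEq K]
    (g : Fin N → T) (c : Fin N → K) (t : T) (k : K) : ℕ :=
  (Finset.univ.filter fun i => g i = t ∧ c i = k).card

/-- Per-cluster group entropy
`H_k = -∑ t, (|g̃_t ∩ c̃_k|/|c̃_k|) log (|g̃_t ∩ c̃_k|/|c̃_k|)`
(natural log, `0 log 0 = 0`). -/
noncomputable def Hclu {N : ℕ} {T K : Type*} [Fintype T] [DecidableEq T] [DecidableEq K]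
    (g : Fin N → T) (c : Fin N → K) (k : K) : ℝ :=
  -∑ t : T, ((gccnt g c t k : ℝ) / (ccnt c k : ℝ)) *
      Real.log ((gccnt g c t k : ℝ) / (ccnt c k : ℝ))

/-- Global group entropy `H = -∑ t, (|g̃_t|/N) log (|g̃_t|/N)`
(natural log, `0 log 0 = 0`). -/
noncomputable def Hglob {N : ℕ} {T : Type*} [Fintype T] [DecidableEq T]
    (g : Fin N → T) : ℝ :=
  -∑ t : T, ((gcnt g t : ℝ) / (N : ℝ)) * Real.log ((gcnt g t : ℝ) / (N : ℝ))

open Real Finset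

section Jensen

variable {ι τ : Type*} {s : Finset ι} {w : ι → ℝ}

theorem sum_mul_negMulLog_le_negMulLog_sum (hw : ∀ i ∈ s, 0 ≤ w i) (hw1 : ∑ i ∈ s, w i = 1)
    {p : ι → ℝ} (hp : ∀ i ∈ s, 0 ≤ p i) :
    ∑ i ∈ s, w i * negMulLog (p i) ≤ negMulLog (∑ i ∈ s, w i * p i) :=
  concaveOn_negMulLog.le_map_sum hw hw1 hp

theorem sum_mul_negMulLog_eq_negMulLog_sum_iff (hw : ∀ i ∈ s, 0 < w i)
    (hw1 : ∑ i ∈ s, w i = 1) {p : ι → ℝ} (hp : ∀ i ∈ s, 0 ≤ p i) :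
    ∑ i ∈ s, w i * negMulLog (p i) = negMulLog (∑ i ∈ s, w i * p i) ↔
      ∀ i ∈ s, p i = ∑ j ∈ s, w j * p j :=
  eq_comm.trans (strictConcaveOn_negMulLog.map_sum_eq_iff hw hw1 hp)

theorem sum_sum_mul_negMulLog_eq_iff (u : Finset τ) (hw : ∀ i ∈ s, 0 < w i)
    (hw1 : ∑ i ∈ s, w i = 1) {p : τ → ι → ℝ} (hp : ∀ t ∈ u, ∀ i ∈ s, 0 ≤ p t i) :
    ∑ t ∈ u, ∑ i ∈ s, w i * negMulLog (p t i) = ∑ t ∈ u, negMulLog (∑ i ∈ s, w i * p t i) ↔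
      ∀ t ∈ u, ∀ i ∈ s, p t i = ∑ j ∈ s, w j * p t j := by
  rw [sum_eq_sum_iff_of_le fun t ht =>
    sum_mul_negMulLog_le_negMulLog_sum (fun i hi => (hw i hi).le) hw1 (hp t ht)]
  exact forall₂_congr fun t ht => sum_mul_negMulLog_eq_negMulLog_sum_iff hw hw1 (hp t ht)

end Jensen

section Counting

variable {N : ℕ} {T K : Type*} [DecidableEq T] [Fintype K] [DecidableEq K]

theorem sum_ccnt (c : Fin N → K) : ∑ k, ccnt c k = N := by
  simpa [ccnt] using (card_eq_sum_card_fiberwise (f := c) (s := univ) (t := univ)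
    fun _ _ => mem_univ _).symm

theorem sum_gccnt (g : Fin N → T) (c : Fin N → K) (t : T) :
    ∑ k, gccnt g c t k = gcnt g t := by
  simpa [gcnt, gccnt, filter_filter] using (card_eq_sum_card_fiberwise (f := c)
    (s := univ.filter fun i => g i = t) (t := univ) fun _ _ => mem_univ _).symm

theorem sum_ccnt_div_mul_gccnt_div (g : Fin N → T) (c : Fin N → K)
    (hc : ∀ k : K, 0 < ccnt c k) (t : T) :
    ∑ k, (ccnt c k : ℝ) / N * ((gccnt g c t k : ℝ) / ccnt c k) = (gcnt g t : ℝ) / N := by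
  have hterm : ∀ k, (ccnt c k : ℝ) / N * ((gccnt g c t k : ℝ) / ccnt c k) =
      (gccnt g c t k : ℝ) / N := fun k => by
    have : (ccnt c k : ℝ) ≠ 0 := by exact_mod_cast (hc k).ne'
    field_simp
  simp only [hterm, ← sum_div, ← Nat.cast_sum, sum_gccnt]

end Counting

section Entropy

variable {N : ℕ} {T K : Type*} [Fintype T] [DecidableEq T]

theorem Hglob_eq_sum_negMulLog (g : Fin N → T) :
    Hglob g = ∑ t, negMulLog ((gcnt g t : ℝ) / N) := by
  simp only [Hglob, negMulLog, ← sum_neg_distrib, neg_mul]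

theorem sum_mul_Hclu_eq_sum_sum_negMulLog [Fintype K] [DecidableEq K]
    (g : Fin N → T) (c : Fin N → K) (w : K → ℝ) :
    ∑ k, w k * Hclu g c k =
      ∑ t, ∑ k, w k * negMulLog ((gccnt g c t k : ℝ) / ccnt c k) := by
  rw [sum_comm]
  simp only [Hclu, negMulLog, mul_sum, ← sum_neg_distrib, neg_mul, mul_neg]

end Entropy

/-- The equality `∑ k, (|c̃_k|/N) · H_k = H` holds iff the counting independence
condition `|g̃_t ∩ c̃_k| · N = |g̃_t| · |c̃_k|` holds for all groups `t` and clusters `k`. -/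
theorem stmt10 {N : ℕ} {T K : Type*} [Fintype T] [DecidableEq T] [Fintype K] [DecidableEq K]
    (g : Fin N → T) (c : Fin N → K) (hN : 0 < N)
    (hc : ∀ k : K, 0 < ccnt c k) :
    (∑ k : K, ((ccnt c k : ℝ) / (N : ℝ)) * Hclu g c k = Hglob g)
      ↔ ∀ (t : T) (k : K), gccnt g c t k * N = gcnt g t * ccnt c k := by
  have hN' : (N : ℝ) ≠ 0 := by exact_mod_cast hN.ne'
  have hc' : ∀ k, (ccnt c k : ℝ) ≠ 0 := fun k => by exact_mod_cast (hc k).ne'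
  have hw : ∀ k ∈ univ, 0 < (ccnt c k : ℝ) / N := fun k _ => by
    have := hc k; positivity
  have hw1 : ∑ k, (ccnt c k : ℝ) / N = 1 := by
    rw [← sum_div, ← Nat.cast_sum, sum_ccnt, div_self hN']
  have hmean := sum_ccnt_div_mul_gccnt_div g c hc
  rw [sum_mul_Hclu_eq_sum_sum_negMulLog, Hglob_eq_sum_negMulLog]
  simp_rw [← hmean]
  rw [sum_sum_mul_negMulLog_eq_iff univ hw hw1 fun t _ k _ => by positivity]
  simp only [hmean, mem_univ, forall_const, div_eq_div_iff (hc' _) hN']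
  norm_cast
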